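/- Let (S,h) be a smooth 4-polarized lattice and let c₁,c₂,c₃ ∈ root₁(S,h) be a triangle. Then c₀ := h − c₁ − c₂ − c₃ belongs to root₁(S,h) and satisfies ⟨c₀,cᵢ⟩ = 1 for i = 1,2,3; moreover, c₀ is the unique l ∈ root₁(S,h) with ⟨l, c₁ + c₂ + c₃⟩ = 3 (the triangle has a unique 3-section). -/

import Mathlib

/-!
Common definitions: 4-polarized lattices, lines, roots, Fano graphs
(following Degtyarev–Rams, "Counting lines with Vinberg's algorithm").
-/

namespace K3

variable {S : Type*} [AddCommGroup S] [Module ℤ S]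

/-- `root₁(S,h)`: the *lines* of a 4-polarized lattice. -/
def root1 (B : S →ₗ[ℤ] S →ₗ[ℤ] ℤ) (h : S) : Set S :=
  {l : S | B l l = -2 ∧ B l h = 1}

/-- `root₀(S,h)`: the *roots* of a 4-polarized lattice. -/
def root0 (B : S →ₗ[ℤ] S →ₗ[ℤ] ℤ) (h : S) : Set S :=
  {r : S | B r r = -2 ∧ B r h = 0}

/-- `(S,B,h)` is a 4-polarized lattice: `S` is a finitely generated free ℤ-module, `B`
a symmetric bilinear form, `⟨h,h⟩ = 4`, and `⟨v,v⟩ < 0` for nonzero `v ⊥ h`. -/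
structure IsPolarized (B : S →ₗ[ℤ] S →ₗ[ℤ] ℤ) (h : S) : Prop where
  free : Module.Free ℤ S
  finite : Module.Finite ℤ S
  symm : ∀ u v : S, B u v = B v u
  deg : B h h = 4
  hyperbolic : ∀ v : S, v ≠ 0 → B v h = 0 → B v v < 0

/-- Admissibility: there is no `u` with `⟨u,u⟩ = 0` and `⟨u,h⟩ = 2`. -/
def IsAdmissible (B : S →ₗ[ℤ] S →ₗ[ℤ] ℤ) (h : S) : Prop :=
  ¬ ∃ u : S, B u u = 0 ∧ B u h = 2

/-- The E₈ Cartan matrix (Bourbaki numbering of the Dynkin diagram). -/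
def e8Cartan : Matrix (Fin 8) (Fin 8) ℤ :=
  !![2,0,-1,0,0,0,0,0;
     0,2,0,-1,0,0,0,0;
     -1,0,2,-1,0,0,0,0;
     0,-1,-1,2,-1,0,0,0;
     0,0,0,-1,2,-1,0,0;
     0,0,0,0,-1,2,-1,0;
     0,0,0,0,0,-1,2,-1;
     0,0,0,0,0,0,-1,2]

/-- The Gram matrix of `L := E₈ ⊕ E₈ ⊕ U ⊕ U ⊕ U`, where `E₈` is *negative* definite
(Gram matrix the negative of the E₈ Cartan matrix) and `U` has Gram matrix `[[0,1],[1,0]]`. -/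
def LGram : Matrix (Fin 22) (Fin 22) ℤ := fun i j =>
  if hi : (i : ℕ) < 8 then
    (if hj : (j : ℕ) < 8 then -e8Cartan ⟨i, hi⟩ ⟨j, hj⟩ else 0)
  else if hi' : (i : ℕ) < 16 then
    (if hj' : 8 ≤ (j : ℕ) ∧ (j : ℕ) < 16 then
      -e8Cartan ⟨(i : ℕ) - 8, by omega⟩ ⟨(j : ℕ) - 8, by omega⟩ else 0)
  else
    (if 16 ≤ (j : ℕ) ∧ (i : ℕ) / 2 = (j : ℕ) / 2 ∧ i ≠ j then 1 else 0)

/-- A geometric 4-polarized lattice: admissible, even, and admitting a primitive isometric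
embedding into `L = 2E₈ ⊕ 3U` (primitive = the quotient by the image is torsion-free). -/
structure IsGeometric (B : S →ₗ[ℤ] S →ₗ[ℤ] ℤ) (h : S) extends IsPolarized B h : Prop where
  admissible : IsAdmissible B h
  even : ∀ v : S, Even (B v v)
  embeds : ∃ f : S →ₗ[ℤ] (Fin 22 → ℤ), Function.Injective f ∧
    (∀ u v : S, B u v = ∑ i, ∑ j, f u i * LGram i j * f v j) ∧
    (∀ (x : Fin 22 → ℤ) (n : ℤ), n ≠ 0 → n • x ∈ LinearMap.range f →
      x ∈ LinearMap.range f)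

/-- A ℤ-linear functional is *Weyl-generic* if it does not vanish on any root. -/
def WeylGeneric (B : S →ₗ[ℤ] S →ₗ[ℤ] ℤ) (h : S) (φ : S →ₗ[ℤ] ℤ) : Prop :=
  ∀ r ∈ root0 B h, φ r ≠ 0

/-- The vertex set of the Fano graph `Fn_φ(S,h)`. -/
def fanoVerts (B : S →ₗ[ℤ] S →ₗ[ℤ] ℤ) (h : S) (φ : S →ₗ[ℤ] ℤ) : Set S :=
  {l ∈ root1 B h | ∀ r ∈ root0 B h, 0 < φ r → 0 ≤ B l r}

/-- The set `Γ` together with `h` spans `S ⊗ ℚ`; since `S` is free, this is equivalent to: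
every `s : S` has a nonzero integer multiple in the ℤ-span of `Γ ∪ {h}`. -/
def QSpannedByLines (Γ : Set S) (h : S) : Prop :=
  ∀ s : S, ∃ n : ℤ, n ≠ 0 ∧ n • s ∈ Submodule.span ℤ (Γ ∪ {h})

/-- The Fano graph as a simple graph on `Γ`: distinct `u, v` adjacent iff `⟨u,v⟩ = 1`. -/
def fanoGraph (B : S →ₗ[ℤ] S →ₗ[ℤ] ℤ) (Γ : Set S) : SimpleGraph Γ where
  Adj u v := u ≠ v ∧ B u.1 v.1 = 1 ∧ B v.1 u.1 = 1
  symm := ⟨fun u v hadj => ⟨hadj.1.symm, hadj.2.2, hadj.2.1⟩⟩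
  loopless := ⟨fun u hadj => hadj.1 rfl⟩

/-- `Γ` has no separating roots: no root is positive on one element of `Γ` and negative
on another. -/
def NoSeparatingRoots (B : S →ₗ[ℤ] S →ₗ[ℤ] ℤ) (h : S) (Γ : Set S) : Prop :=
  ¬ ∃ r ∈ root0 B h, ∃ u ∈ Γ, ∃ v ∈ Γ, 0 < B r u ∧ B r v < 0

/-- A triangle in a set `Γ` of lines: three distinct elements pairwise of product `1`. -/
def IsTriangle (B : S →ₗ[ℤ] S →ₗ[ℤ] ℤ) (Γ : Set S) (c₁ c₂ c₃ : S) : Prop :=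
  c₁ ∈ Γ ∧ c₂ ∈ Γ ∧ c₃ ∈ Γ ∧ c₁ ≠ c₂ ∧ c₁ ≠ c₃ ∧ c₂ ≠ c₃ ∧
    B c₁ c₂ = 1 ∧ B c₁ c₃ = 1 ∧ B c₂ c₃ = 1

/-- Simple sections through `a` of the triangle `(a,b,c)`:
`sec a := {l ∈ Γ : ⟨l,a⟩ = 1, ⟨l,b⟩ = ⟨l,c⟩ = 0}`. -/
def sec (B : S →ₗ[ℤ] S →ₗ[ℤ] ℤ) (Γ : Set S) (a b c : S) : Set S :=
  {l ∈ Γ | B l a = 1 ∧ B l b = 0 ∧ B l c = 0}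

/-- The pencil of a triangle `(c₁,c₂,c₃)` in `Γ`. -/
def pencil (B : S →ₗ[ℤ] S →ₗ[ℤ] ℤ) (Γ : Set S) (c₁ c₂ c₃ : S) : Set S :=
  {c₁, c₂, c₃} ∪ {l ∈ Γ | B l c₁ = 0 ∧ B l c₂ = 0 ∧ B l c₃ = 0}

end K3

namespace K3

/-- A 4-polarized lattice is *smooth* if it has no roots and no `u` with `⟨u,u⟩ = 0`,
`⟨u,h⟩ = 2`. -/
def IsSmooth {S : Type*} [AddCommGroup S] [Module ℤ S]
    (B : S →ₗ[ℤ] S →ₗ[ℤ] ℤ) (h : S) : Prop :=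
  root0 B h = ∅ ∧ IsAdmissible B h

/-!
For `c₀ = h - c₁ - c₂ - c₃`, expanding with `⟨h,h⟩ = 4`, `⟨cᵢ,cᵢ⟩ = -2`, `⟨cᵢ,h⟩ = ⟨cᵢ,cⱼ⟩ = 1`
gives `⟨c₀,h⟩ = ⟨c₀,cᵢ⟩ = 1` and `⟨c₀,c₀⟩ = -2`. A line `l` with `⟨l, c₁+c₂+c₃⟩ = 3` has
`⟨l,c₀⟩ = -2`, so `l - c₀` is isotropic and orthogonal to `h`, hence zero by hyperbolicity.
-/

section

variable {S : Type*} [AddCommGroup S] [Module ℤ S] {B : S →ₗ[ℤ] S →ₗ[ℤ] ℤ} {h : S}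

theorem IsPolarized.eq_of_mem_root1_of_apply_eq_neg_two (hpol : IsPolarized B h) {l m : S}
    (hl : l ∈ root1 B h) (hm : m ∈ root1 B h) (hlm : B l m = -2) : l = m := by
  obtain ⟨hll, hlh⟩ := hl
  obtain ⟨hmm, hmh⟩ := hm
  have hml : B m l = -2 := hpol.symm m l ▸ hlm
  have hvh : B (l - m) h = 0 := by simp [hlh, hmh]
  have hvv : B (l - m) (l - m) = 0 := by simp [hll, hlm, hml, hmm]
  by_contra hne
  have := hpol.hyperbolic (l - m) (sub_ne_zero.mpr hne) hvh
  omega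

variable {c₁ c₂ c₃ : S}

theorem IsTriangle.apply_sub_sub_sub_eq_one (hpol : IsPolarized B h)
    (htri : IsTriangle B (root1 B h) c₁ c₂ c₃) :
    B (h - c₁ - c₂ - c₃) c₁ = 1 ∧ B (h - c₁ - c₂ - c₃) c₂ = 1 ∧
      B (h - c₁ - c₂ - c₃) c₃ = 1 := by
  obtain ⟨⟨h11, h1h⟩, ⟨h22, h2h⟩, ⟨h33, h3h⟩, -, -, -, h12, h13, h23⟩ := htri
  have hsymm := hpol.symm
  refine ⟨?_, ?_, ?_⟩ <;>
    simp only [map_sub, LinearMap.sub_apply, hsymm h, hsymm c₂ c₁, hsymm c₃ c₁, hsymm c₃ c₂,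
      h11, h22, h33, h1h, h2h, h3h, h12, h13, h23] <;> norm_num

theorem IsTriangle.sub_sub_sub_mem_root1 (hpol : IsPolarized B h)
    (htri : IsTriangle B (root1 B h) c₁ c₂ c₃) : h - c₁ - c₂ - c₃ ∈ root1 B h := by
  obtain ⟨hc₁, hc₂, hc₃⟩ := htri.apply_sub_sub_sub_eq_one hpol
  obtain ⟨⟨-, h1h⟩, ⟨-, h2h⟩, ⟨-, h3h⟩, -⟩ := htri
  have hc₀h : B (h - c₁ - c₂ - c₃) h = 1 := by
    simp only [map_sub, LinearMap.sub_apply, hpol.deg, h1h, h2h, h3h]; norm_num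
  refine ⟨?_, hc₀h⟩
  rw [map_sub (B (h - c₁ - c₂ - c₃)), map_sub, map_sub, hc₀h, hc₁, hc₂, hc₃]
  norm_num

end

theorem smooth_triangle_unique_three_section_general
    {S : Type*} [AddCommGroup S] [Module ℤ S]
    (B : S →ₗ[ℤ] S →ₗ[ℤ] ℤ) (h : S)
    (hpol : IsPolarized B h)
    (c₁ c₂ c₃ : S) (htri : IsTriangle B (root1 B h) c₁ c₂ c₃) :
    h - c₁ - c₂ - c₃ ∈ root1 B h ∧
    B (h - c₁ - c₂ - c₃) c₁ = 1 ∧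
    B (h - c₁ - c₂ - c₃) c₂ = 1 ∧
    B (h - c₁ - c₂ - c₃) c₃ = 1 ∧
    ∀ l ∈ root1 B h, B l (c₁ + c₂ + c₃) = 3 → l = h - c₁ - c₂ - c₃ := by
  have hc₀ := htri.sub_sub_sub_mem_root1 hpol
  obtain ⟨hc₀₁, hc₀₂, hc₀₃⟩ := htri.apply_sub_sub_sub_eq_one hpol
  refine ⟨hc₀, hc₀₁, hc₀₂, hc₀₃, fun l hl hl₃ => ?_⟩
  refine hpol.eq_of_mem_root1_of_apply_eq_neg_two hl hc₀ ?_
  have hsub : h - c₁ - c₂ - c₃ = h - (c₁ + c₂ + c₃) := by abel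
  rw [hsub, map_sub, hl.2, hl₃]
  norm_num

/-- Lemma 4.1(1). In a smooth 4-polarized lattice, a triangle
`c₁,c₂,c₃` of lines has the unique 3-section `c₀ := h - c₁ - c₂ - c₃`: it is a line
meeting each `cᵢ` once, and any line `l` with `⟨l, c₁+c₂+c₃⟩ = 3` equals `c₀`. -/
theorem smooth_triangle_unique_three_section
    {S : Type*} [AddCommGroup S] [Module ℤ S]
    (B : S →ₗ[ℤ] S →ₗ[ℤ] ℤ) (h : S)
    (hpol : IsPolarized B h) (hsm : IsSmooth B h)
    (c₁ c₂ c₃ : S) (htri : IsTriangle B (root1 B h) c₁ c₂ c₃) :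
    h - c₁ - c₂ - c₃ ∈ root1 B h ∧
    B (h - c₁ - c₂ - c₃) c₁ = 1 ∧
    B (h - c₁ - c₂ - c₃) c₂ = 1 ∧
    B (h - c₁ - c₂ - c₃) c₃ = 1 ∧
    ∀ l ∈ root1 B h, B l (c₁ + c₂ + c₃) = 3 → l = h - c₁ - c₂ - c₃ :=
  smooth_triangle_unique_three_section_general B h hpol c₁ c₂ c₃ htri

end K3
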